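/- There exist a type (a,c) ∈ {0,1}² and a set W ⊆ P such that: (i) every point of W lies in a 1×1 cell C_{i,j} = [2i+a, 2i+a+1] × [2j+c, 2j+c+1] for some integers i, j; (ii) for each pair (i,j), all points of W lying in C_{i,j} are contained in one of the four axis-aligned sub-squares of side 1/2 of C_{i,j}, and their total demand ∑_{p ∈ W ∩ C_{i,j}} N(p) is at most m; and (iii) 32·∑_{p∈W} b(p) ≥ OPT. Moreover, any set W satisfying (i) and (ii) admits a feasible allocation with winner set W; hence the multi-unit spectrum allocation problem admits a 32-approximation of this structured form. -/
import Mathlib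


open scoped Classical

noncomputable section

/-- `p` lies in the 1×1 cell `C_{i,j} = [2i+a, 2i+a+1] × [2j+c, 2j+c+1]`. -/
def InCell (a c : ℕ) (i j : ℤ) (p : EuclideanSpace ℝ (Fin 2)) : Prop :=
  p 0 ∈ Set.Icc (2 * (i : ℝ) + a) (2 * (i : ℝ) + a + 1) ∧
  p 1 ∈ Set.Icc (2 * (j : ℝ) + c) (2 * (j : ℝ) + c + 1)

/-- `p` lies in the axis-aligned sub-square of side `1/2` of the cell
`C_{i,j}` indexed by `(u,v) ∈ {0,1}²`. -/
def InSub (a c : ℕ) (i j : ℤ) (u v : ℕ) (p : EuclideanSpace ℝ (Fin 2)) : Prop :=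
  p 0 ∈ Set.Icc (2 * (i : ℝ) + a + (u : ℝ) / 2)
      (2 * (i : ℝ) + a + (u : ℝ) / 2 + 1 / 2) ∧
  p 1 ∈ Set.Icc (2 * (j : ℝ) + c + (v : ℝ) / 2)
      (2 * (j : ℝ) + c + (v : ℝ) / 2 + 1 / 2)

/-- Conditions (i) and (ii): every point of `W` lies in a cell `C_{i,j}` of
type `(a,c)`; and for each cell, the points of `W` in it all lie in one of its
four side-1/2 sub-squares and their total demand is at most `m`. -/
def Structured (a c : ℕ) (N : EuclideanSpace ℝ (Fin 2) → ℕ) (m : ℕ)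
    (W : Finset (EuclideanSpace ℝ (Fin 2))) : Prop :=
  (∀ p ∈ W, ∃ i j : ℤ, InCell a c i j p) ∧
  (∀ i j : ℤ,
    (∃ u ≤ 1, ∃ v ≤ 1, ∀ p ∈ W, InCell a c i j p → InSub a c i j u v p) ∧
    (∑ p ∈ W.filter (fun p => InCell a c i j p), N p) ≤ m)

/-- A feasible allocation: a winner set `W ⊆ P` together with an assignment of
`N p` of the `m` channels to each winner `p`, such that distinct conflicting
winners (at Euclidean distance < 1) get disjoint channel sets. -/
def FeasibleAlloc (P : Finset (EuclideanSpace ℝ (Fin 2)))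
    (N : EuclideanSpace ℝ (Fin 2) → ℕ) (m : ℕ)
    (W : Finset (EuclideanSpace ℝ (Fin 2)))
    (f : EuclideanSpace ℝ (Fin 2) → Finset (Fin m)) : Prop :=
  W ⊆ P ∧ (∀ p ∈ W, (f p).card = N p) ∧
  ∀ p ∈ W, ∀ q ∈ W, p ≠ q → dist p q < 1 → Disjoint (f p) (f q)

lemma coord_le_dist (p q : EuclideanSpace ℝ (Fin 2)) (i : Fin 2) :
    |p i - q i| ≤ dist p q := by
  rw [EuclideanSpace.dist_eq]
  have h1 : |p i - q i| = Real.sqrt (dist (p i) (q i) ^ 2) := by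
    rw [Real.sqrt_sq_eq_abs, Real.dist_eq, abs_abs]
  rw [h1]
  exact Real.sqrt_le_sqrt (Finset.single_le_sum (f := fun t => dist (p t) (q t) ^ 2)
    (fun t _ => sq_nonneg _) (Finset.mem_univ i))

lemma sub_subset_cell {a c : ℕ} (ha : a ≤ 1) (hc : c ≤ 1) {i j : ℤ} {u v : ℕ}
    (hu : u ≤ 1) (hv : v ≤ 1) {p : EuclideanSpace ℝ (Fin 2)}
    (h : InSub a c i j u v p) : InCell a c i j p := by
  obtain ⟨⟨h1, h2⟩, h3, h4⟩ := h
  have hu' : (u : ℝ) ≤ 1 := by exact_mod_cast hu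
  have hv' : (v : ℝ) ≤ 1 := by exact_mod_cast hv
  have hu0 : (0:ℝ) ≤ u := Nat.cast_nonneg u
  have hv0 : (0:ℝ) ≤ v := Nat.cast_nonneg v
  exact ⟨⟨by linarith, by linarith⟩, ⟨by linarith, by linarith⟩⟩

lemma cell_unique {a c : ℕ} {i j i' j' : ℤ} {p : EuclideanSpace ℝ (Fin 2)}
    (h : InCell a c i j p) (h' : InCell a c i' j' p) : i = i' ∧ j = j' := by
  obtain ⟨⟨h1, h2⟩, h3, h4⟩ := h
  obtain ⟨⟨h1', h2'⟩, h3', h4'⟩ := h'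
  constructor
  · have e1 : (2 * (i:ℝ) ≤ 2 * i' + 1) := by linarith
    have e2 : (2 * (i':ℝ) ≤ 2 * i + 1) := by linarith
    have e1' : (2 * i ≤ 2 * i' + 1) := by exact_mod_cast e1
    have e2' : (2 * i' ≤ 2 * i + 1) := by exact_mod_cast e2
    omega
  · have e1 : (2 * (j:ℝ) ≤ 2 * j' + 1) := by linarith
    have e2 : (2 * (j':ℝ) ≤ 2 * j + 1) := by linarith
    have e1' : (2 * j ≤ 2 * j' + 1) := by exact_mod_cast e1
    have e2' : (2 * j' ≤ 2 * j + 1) := by exact_mod_cast e2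
    omega

lemma far_of_ne_cell {a c : ℕ} {i j i' j' : ℤ} {p q : EuclideanSpace ℝ (Fin 2)}
    (h : InCell a c i j p) (h' : InCell a c i' j' q) (hne : ¬(i = i' ∧ j = j')) :
    1 ≤ dist p q := by
  have key : ∀ (x y : ℝ) (k k' : ℤ) (w : ℝ), k ≠ k' →
      x ∈ Set.Icc (2*(k:ℝ)+w) (2*(k:ℝ)+w+1) → y ∈ Set.Icc (2*(k':ℝ)+w) (2*(k':ℝ)+w+1) →
      1 ≤ |x - y| := by
    intro x y k k' w hkk ⟨hx1, hx2⟩ ⟨hy1, hy2⟩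
    rcases lt_or_gt_of_ne hkk with hlt | hlt
    · have : (k:ℝ) + 1 ≤ k' := by exact_mod_cast hlt
      rw [abs_sub_comm, le_abs]; left; linarith
    · have : (k':ℝ) + 1 ≤ k := by exact_mod_cast hlt
      rw [le_abs]; left; linarith
  rcases not_and_or.mp hne with hne | hne
  · exact le_trans (key _ _ i i' a hne h.1 h'.1) (coord_le_dist p q 0)
  · exact le_trans (key _ _ j j' c hne h.2 h'.2) (coord_le_dist p q 1)

lemma close_of_same_sub {a c : ℕ} {i j : ℤ} {u v : ℕ} {p q : EuclideanSpace ℝ (Fin 2)}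
    (h : InSub a c i j u v p) (h' : InSub a c i j u v q) : dist p q < 1 := by
  have b0 : |p 0 - q 0| ≤ 1/2 := by
    obtain ⟨⟨h1, h2⟩, -⟩ := h; obtain ⟨⟨h1', h2'⟩, -⟩ := h'
    rw [abs_le]; constructor <;> linarith
  have b1 : |p 1 - q 1| ≤ 1/2 := by
    obtain ⟨-, h1, h2⟩ := h; obtain ⟨-, h1', h2'⟩ := h'
    rw [abs_le]; constructor <;> linarith
  rw [EuclideanSpace.dist_eq]
  have : ∑ t : Fin 2, dist (p t) (q t) ^ 2 ≤ 1/2 := by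
    rw [Fin.sum_univ_two]
    have e0 : dist (p 0) (q 0) ^ 2 ≤ (1/2)^2 := by
      rw [Real.dist_eq]; exact pow_le_pow_left₀ (abs_nonneg _) b0 2
    have e1 : dist (p 1) (q 1) ^ 2 ≤ (1/2)^2 := by
      rw [Real.dist_eq]; exact pow_le_pow_left₀ (abs_nonneg _) b1 2
    norm_num at e0 e1 ⊢; linarith
  calc Real.sqrt (∑ t : Fin 2, dist (p t) (q t) ^ 2) ≤ Real.sqrt (1/2) :=
        Real.sqrt_le_sqrt this
    _ < 1 := by
        rw [show (1:ℝ) = Real.sqrt 1 by simp]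
        exact Real.sqrt_lt_sqrt (by norm_num) (by norm_num)

lemma floor_sub {x : ℝ} {a u : ℕ} {i : ℤ} (h : ⌊2*x⌋ = 4*i + 2*(a:ℤ) + u) :
    x ∈ Set.Icc (2*(i:ℝ) + a + (u:ℝ)/2) (2*(i:ℝ) + a + (u:ℝ)/2 + 1/2) := by
  rw [Int.floor_eq_iff] at h
  obtain ⟨h1, h2⟩ := h
  push_cast at h1 h2
  constructor <;> [linarith; linarith]

lemma image_mod_disjoint {m : ℕ} (hm0 : 0 < m) {s t : Finset ℕ}
    (hs : ∀ x ∈ s, x < m) (ht : ∀ x ∈ t, x < m) (h : Disjoint s t) :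
    Disjoint (s.image fun x => (⟨x % m, Nat.mod_lt x hm0⟩ : Fin m))
      (t.image fun x => (⟨x % m, Nat.mod_lt x hm0⟩ : Fin m)) := by
  rw [Finset.disjoint_left]
  rintro z hz hz'
  obtain ⟨x, hx, rfl⟩ := Finset.mem_image.mp hz
  obtain ⟨y, hy, hxy⟩ := Finset.mem_image.mp hz'
  have : y % m = x % m := congrArg Fin.val hxy
  rw [Nat.mod_eq_of_lt (hs x hx), Nat.mod_eq_of_lt (ht y hy)] at this
  exact Finset.disjoint_left.mp h hx (this ▸ hy)

lemma structured_feasible (P : Finset (EuclideanSpace ℝ (Fin 2)))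
    (N : EuclideanSpace ℝ (Fin 2) → ℕ) (m : ℕ) (hm : 1 ≤ m)
    (a c : ℕ) (W : Finset (EuclideanSpace ℝ (Fin 2))) (hWP : W ⊆ P)
    (hS : Structured a c N m W) :
    ∃ f : EuclideanSpace ℝ (Fin 2) → Finset (Fin m), FeasibleAlloc P N m W f := by
  classical
  have hm0 : 0 < m := hm
  let sameCell : EuclideanSpace ℝ (Fin 2) → EuclideanSpace ℝ (Fin 2) → Prop := fun p q => ∃ i j, InCell a c i j p ∧ InCell a c i j q
  let off : EuclideanSpace ℝ (Fin 2) → ℕ := fun p =>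
    ∑ q ∈ W.filter (fun q => sameCell q p ∧ WellOrderingRel q p), N q
  let f : EuclideanSpace ℝ (Fin 2) → Finset (Fin m) := fun p =>
    (Finset.Ico (off p) (off p + N p)).image fun t => (⟨t % m, Nat.mod_lt t hm0⟩ : Fin m)
  have hscTrans : ∀ x p q : EuclideanSpace ℝ (Fin 2), sameCell x p → sameCell p q → sameCell x q := by
    rintro x p q ⟨i, j, hx, hp⟩ ⟨i', j', hp', hq⟩
    obtain ⟨rfl, rfl⟩ := cell_unique hp hp'
    exact ⟨i, j, hx, hq⟩
  have hirr : ∀ p : EuclideanSpace ℝ (Fin 2), ¬ WellOrderingRel p p := fun p => irrefl p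
  -- the crucial bound
  have hbound : ∀ p ∈ W, off p + N p ≤ m := by
    intro p hp
    obtain ⟨i, j, hcell⟩ := hS.1 p hp
    have hpn : p ∉ W.filter (fun q => sameCell q p ∧ WellOrderingRel q p) := by
      simp only [Finset.mem_filter]
      rintro ⟨-, -, h⟩; exact hirr p h
    have hsub : insert p (W.filter (fun q => sameCell q p ∧ WellOrderingRel q p)) ⊆
        W.filter (fun q => InCell a c i j q) := by
      intro x hx
      rcases Finset.mem_insert.mp hx with rfl | hx
      · exact Finset.mem_filter.mpr ⟨hp, hcell⟩
      · obtain ⟨hxW, ⟨i', j', hx', hp'⟩, -⟩ := Finset.mem_filter.mp hx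
        obtain ⟨rfl, rfl⟩ := cell_unique hp' hcell
        exact Finset.mem_filter.mpr ⟨hxW, hx'⟩
    calc off p + N p = ∑ q ∈ insert p (W.filter (fun q => sameCell q p ∧ WellOrderingRel q p)), N q := by
          rw [Finset.sum_insert hpn]; ring
      _ ≤ ∑ q ∈ W.filter (fun q => InCell a c i j q), N q :=
          Finset.sum_le_sum_of_subset hsub
      _ ≤ m := (hS.2 i j).2
  have hmono : ∀ p ∈ W, ∀ q : EuclideanSpace ℝ (Fin 2), sameCell p q → WellOrderingRel p q → off p + N p ≤ off q := by
    intro p hp q hsc hr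
    have hpn : p ∉ W.filter (fun x => sameCell x p ∧ WellOrderingRel x p) := by
      simp only [Finset.mem_filter]
      rintro ⟨-, -, h⟩; exact hirr p h
    have hsub : insert p (W.filter (fun x => sameCell x p ∧ WellOrderingRel x p)) ⊆
        W.filter (fun x => sameCell x q ∧ WellOrderingRel x q) := by
      intro x hx
      rcases Finset.mem_insert.mp hx with rfl | hx
      · exact Finset.mem_filter.mpr ⟨hp, hsc, hr⟩
      · obtain ⟨hxW, hxsc, hxr⟩ := Finset.mem_filter.mp hx
        exact Finset.mem_filter.mpr ⟨hxW, hscTrans x p q hxsc hsc,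
          trans_of WellOrderingRel hxr hr⟩
    calc off p + N p = ∑ x ∈ insert p (W.filter (fun x => sameCell x p ∧ WellOrderingRel x p)), N x := by
          rw [Finset.sum_insert hpn]; ring
      _ ≤ off q := Finset.sum_le_sum_of_subset hsub
  refine ⟨f, hWP, ?_, ?_⟩
  · intro p hp
    have hb := hbound p hp
    have hinj : Set.InjOn (fun t => (⟨t % m, Nat.mod_lt t hm0⟩ : Fin m))
        (Finset.Ico (off p) (off p + N p)) := by
      intro x hx y hy hxy
      simp only [Finset.coe_Ico, Set.mem_Ico] at hx hy
      have : x % m = y % m := congrArg Fin.val hxy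
      rwa [Nat.mod_eq_of_lt (by omega), Nat.mod_eq_of_lt (by omega)] at this
    rw [Finset.card_image_of_injOn hinj, Nat.card_Ico]
    omega
  · intro p hp q hq hne hd
    obtain ⟨i, j, hcp⟩ := hS.1 p hp
    obtain ⟨i', j', hcq⟩ := hS.1 q hq
    have heq : i = i' ∧ j = j' := by
      by_contra h
      exact absurd hd (not_lt.mpr (far_of_ne_cell hcp hcq h))
    obtain ⟨rfl, rfl⟩ := heq
    have hsc : sameCell p q := ⟨i, j, hcp, hcq⟩
    have hIcoDisj : ∀ x y n1 n2 : ℕ, x + n1 ≤ y →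
        Disjoint (Finset.Ico x (x + n1)) (Finset.Ico y (y + n2)) := by
      intro x y n1 n2 h
      rw [Finset.disjoint_left]
      intro z hz hz'
      rw [Finset.mem_Ico] at hz hz'
      omega
    have hboundp := hbound p hp
    have hboundq := hbound q hq
    rcases trichotomous_of WellOrderingRel p q with hr | rfl | hr
    · exact image_mod_disjoint hm0
        (fun x hx => by rw [Finset.mem_Ico] at hx; omega)
        (fun x hx => by rw [Finset.mem_Ico] at hx; omega)
        (hIcoDisj _ _ _ _ (hmono p hp q hsc hr))
    · exact absurd rfl hne
    · exact image_mod_disjoint hm0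
        (fun x hx => by rw [Finset.mem_Ico] at hx; omega)
        (fun x hx => by rw [Finset.mem_Ico] at hx; omega)
        (Disjoint.symm (hIcoDisj _ _ _ _ (hmono q hq p ⟨i, j, hcq, hcp⟩ hr)))

lemma exists_structured_approx (P : Finset (EuclideanSpace ℝ (Fin 2)))
    (b : EuclideanSpace ℝ (Fin 2) → ℝ) (N : EuclideanSpace ℝ (Fin 2) → ℕ)
    (m : ℕ) (hm : 1 ≤ m) (hb : ∀ p ∈ P, 0 ≤ b p) :
    ∃ a ≤ 1, ∃ c ≤ 1, ∃ W ⊆ P, Structured a c N m W ∧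
      ∀ (W' : Finset (EuclideanSpace ℝ (Fin 2)))
        (f' : EuclideanSpace ℝ (Fin 2) → Finset (Fin m)),
          FeasibleAlloc P N m W' f' →
            ∑ p ∈ W', b p ≤ 32 * ∑ p ∈ W, b p := by
  classical
  set F := P.powerset.filter
    (fun W => ∃ f : EuclideanSpace ℝ (Fin 2) → Finset (Fin m), FeasibleAlloc P N m W f)
    with hF
  have hFne : F.Nonempty := by
    refine ⟨∅, Finset.mem_filter.mpr ⟨Finset.mem_powerset.mpr (Finset.empty_subset P),
      ⟨fun _ => ∅, Finset.empty_subset P, ?_, ?_⟩⟩⟩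
    · intro p hp; simp at hp
    · intro p hp; simp at hp
  obtain ⟨W2, hW2F, hmax⟩ := F.exists_max_image (fun W => ∑ p ∈ W, b p) hFne
  obtain ⟨hW2P', f2, hf2⟩ := Finset.mem_filter.mp hW2F
  have hW2P : W2 ⊆ P := Finset.mem_powerset.mp hW2P'
  set T := ∑ p ∈ W2, b p with hT
  set key : EuclideanSpace ℝ (Fin 2) → ℤ × ℤ :=
    fun p => (⌊2 * p 0⌋ % 4, ⌊2 * p 1⌋ % 4) with hkeydef
  set S : Finset (ℤ × ℤ) := Finset.Icc 0 3 ×ˢ Finset.Icc 0 3 with hS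
  have hmaps : ∀ p ∈ W2, key p ∈ S := by
    intro p _
    simp only [hS, Finset.mem_product, Finset.mem_Icc, hkeydef]
    omega
  have hfib : ∑ rs ∈ S, ∑ p ∈ W2.filter (fun p => key p = rs), b p = T :=
    Finset.sum_fiberwise_of_maps_to hmaps b
  have hSne : S.Nonempty := ⟨(0, 0), by simp [hS]⟩
  have hScard : S.card = 16 := by
    rw [hS, Finset.card_product, Int.card_Icc]
    rfl
  have hkey : ∃ rs ∈ S, T / 16 ≤ ∑ p ∈ W2.filter (fun p => key p = rs), b p := by
    apply Finset.exists_le_of_sum_le hSne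
    rw [hfib, Finset.sum_const, hScard, nsmul_eq_mul]
    push_cast
    linarith
  obtain ⟨⟨r, s⟩, hrsS, hrs⟩ := hkey
  have hrb : (0 ≤ r ∧ r ≤ 3) ∧ 0 ≤ s ∧ s ≤ 3 := by
    simpa only [hS, Finset.mem_product, Finset.mem_Icc] using hrsS
  obtain ⟨aa, uu, haa, huu, hr⟩ : ∃ a u : ℕ, a ≤ 1 ∧ u ≤ 1 ∧ r = 2*(a:ℤ) + u :=
    ⟨(r/2).toNat, (r%2).toNat, by omega, by omega, by omega⟩
  obtain ⟨cc, vv, hcc, hvv, hs⟩ : ∃ c v : ℕ, c ≤ 1 ∧ v ≤ 1 ∧ s = 2*(c:ℤ) + v :=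
    ⟨(s/2).toNat, (s%2).toNat, by omega, by omega, by omega⟩
  set W := W2.filter (fun p => key p = (r, s)) with hWdef
  have hWsub : W ⊆ W2 := Finset.filter_subset _ _
  have hWP : W ⊆ P := hWsub.trans hW2P
  have hpos : ∀ p ∈ W, ∃ i jj : ℤ, InSub aa cc i jj uu vv p := by
    intro p hp
    obtain ⟨-, hk⟩ := Finset.mem_filter.mp hp
    have hk1 : ⌊2 * p 0⌋ % 4 = r := congrArg Prod.fst hk
    have hk2 : ⌊2 * p 1⌋ % 4 = s := congrArg Prod.snd hk
    obtain ⟨i, hi⟩ : ∃ i, ⌊2 * p 0⌋ = 4*i + 2*(aa:ℤ) + uu := ⟨⌊2 * p 0⌋ / 4, by omega⟩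
    obtain ⟨jj, hj⟩ : ∃ jj, ⌊2 * p 1⌋ = 4*jj + 2*(cc:ℤ) + vv := ⟨⌊2 * p 1⌋ / 4, by omega⟩
    exact ⟨i, jj, floor_sub hi, floor_sub hj⟩
  have hcellsub : ∀ p ∈ W, ∀ i jj : ℤ, InCell aa cc i jj p → InSub aa cc i jj uu vv p := by
    intro p hp i jj hc
    obtain ⟨i', j', hs'⟩ := hpos p hp
    obtain ⟨rfl, rfl⟩ := cell_unique (sub_subset_cell haa hcc huu hvv hs') hc
    exact hs'
  have hStruct : Structured aa cc N m W := by
    constructor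
    · intro p hp
      obtain ⟨i, jj, hs'⟩ := hpos p hp
      exact ⟨i, jj, sub_subset_cell haa hcc huu hvv hs'⟩
    · intro i jj
      refine ⟨⟨uu, huu, vv, hvv, fun p hp hc => hcellsub p hp i jj hc⟩, ?_⟩
      set Q := W.filter (fun p => InCell aa cc i jj p) with hQdef
      have hQW : Q ⊆ W := Finset.filter_subset _ _
      have hQsub : ∀ p ∈ Q, InSub aa cc i jj uu vv p := by
        intro p hp
        obtain ⟨hpW, hc⟩ := Finset.mem_filter.mp hp
        exact hcellsub p hpW i jj hc
      have hdisj : ∀ p ∈ Q, ∀ q ∈ Q, p ≠ q → Disjoint (f2 p) (f2 q) := by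
        intro p hp q hq hne
        exact hf2.2.2 p (hWsub (hQW hp)) q (hWsub (hQW hq)) hne
          (close_of_same_sub (hQsub p hp) (hQsub q hq))
      calc ∑ p ∈ Q, N p = ∑ p ∈ Q, (f2 p).card :=
            Finset.sum_congr rfl fun p hp => (hf2.2.1 p (hWsub (hQW hp))).symm
        _ = (Q.biUnion f2).card := (Finset.card_biUnion hdisj).symm
        _ ≤ Fintype.card (Fin m) := Finset.card_le_univ _
        _ = m := Fintype.card_fin m
  refine ⟨aa, haa, cc, hcc, W, hWP, hStruct, ?_⟩
  intro W' f' hfe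
  have hW'F : W' ∈ F := Finset.mem_filter.mpr
    ⟨Finset.mem_powerset.mpr hfe.1, ⟨f', hfe⟩⟩
  have hWnn : 0 ≤ ∑ p ∈ W, b p := Finset.sum_nonneg fun p hp => hb p (hWP hp)
  have h1 : ∑ p ∈ W', b p ≤ T := hmax W' hW'F
  have h2 : T / 16 ≤ ∑ p ∈ W, b p := hrs
  linarith

/-- The multi-unit spectrum allocation problem admits a structured
32-approximation: there is a type `(a,c) ∈ {0,1}²` and a set `W ⊆ P`
satisfying (i), (ii) whose total bid is within a factor 32 of the optimum
social welfare; moreover any set satisfying (i) and (ii) admits a feasible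
allocation with winner set `W`. -/
theorem mua_structured_32_approx (P : Finset (EuclideanSpace ℝ (Fin 2)))
    (b : EuclideanSpace ℝ (Fin 2) → ℝ) (N : EuclideanSpace ℝ (Fin 2) → ℕ)
    (m : ℕ) (hm : 1 ≤ m) (hb : ∀ p ∈ P, 0 ≤ b p)
    (hN : ∀ p ∈ P, 1 ≤ N p ∧ N p ≤ m) :
    (∃ a ≤ 1, ∃ c ≤ 1, ∃ W ⊆ P, Structured a c N m W ∧
      ∀ (W' : Finset (EuclideanSpace ℝ (Fin 2)))
        (f' : EuclideanSpace ℝ (Fin 2) → Finset (Fin m)),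
          FeasibleAlloc P N m W' f' →
            ∑ p ∈ W', b p ≤ 32 * ∑ p ∈ W, b p) ∧
    (∀ a ≤ 1, ∀ c ≤ 1, ∀ W ⊆ P, Structured a c N m W →
      ∃ f : EuclideanSpace ℝ (Fin 2) → Finset (Fin m),
        FeasibleAlloc P N m W f) := by
  exact ⟨exists_structured_approx P b N m hm hb,
    fun a _ c _ W hWP hS => structured_feasible P N m hm a c W hWP hS⟩
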